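/- Under the two-stage randomized design, the plug-in estimators of the average direct effect, the average marginal direct effect, and the average spillover effect are unbiased: for every mechanism a, E[Ŷ(1,a) − Ŷ(0,a)] = ADE(a); E[Σ_a (J_a/J){Ŷ(1,a) − Ŷ(0,a)}] = MDE; and for every z ∈ {0,1} and every pair of mechanisms a ≠ a', E[Ŷ(z,a) − Ŷ(z,a')] = ASE(z;a,a'). -/

import Mathlib

/-!
Both stages rest on one counting fact: if a uniformly random subset of a population of size `N`
always has `c` elements and contains every element equally often, its expected `f`-total is
`c / N` times the population total. Given `A`, the treated set of cluster `j` is a uniform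
`n₁`-subset independent of the other clusters, so `Ŷ_j(z)` is the mean of a simple random sample
of the treated (or control) units and has expectation `Ȳ_j(z, A_j)`. The set of clusters receiving
mechanism `a` has `J_a` elements and is exchangeable, so it contains each cluster with probability
`J_a / J`, whence `E[Ŷ(z, a)] = Ȳ(z, a)`. The three effects are linear in the `Ŷ(z, a)`.
-/

open scoped BigOperators

noncomputable section

/-- A two-stage randomized design: `J` clusters, the `j`-th of size `n j`,
`m` treatment assignment mechanisms, `Jc a` clusters assigned to mechanism `a`,
`n1 j a` treated units in cluster `j` under mechanism `a`, and fixed potential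
outcomes `Y j i z a` (with `z : Bool`, `true` = treatment). -/
structure TwoStageDesign where
  J : ℕ
  m : ℕ
  n : Fin J → ℕ
  Jc : Fin m → ℕ
  n1 : Fin J → Fin m → ℕ
  Y : (j : Fin J) → Fin (n j) → Bool → Fin m → ℝ

namespace TwoStageDesign

variable (d : TwoStageDesign)

/-- The number of units in cluster `j` assigned to condition `z` under mechanism `a`. -/
def nz (z : Bool) (j : Fin d.J) (a : Fin d.m) : ℕ :=
  if z then d.n1 j a else d.n j - d.n1 j a

/-- Admissible first-stage assignments: mechanism `a` is given to exactly `Jc a` clusters. -/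
def mechA : Finset (Fin d.J → Fin d.m) :=
  Finset.univ.filter fun A => ∀ a, (Finset.univ.filter fun j => A j = a).card = d.Jc a

/-- Admissible second-stage assignments given the first stage `A`: the treated set in
cluster `j` has exactly `n1 j (A j)` units. -/
def treatA (A : Fin d.J → Fin d.m) : Finset ((j : Fin d.J) → Finset (Fin (d.n j))) :=
  Finset.univ.filter fun S => ∀ j, (S j).card = d.n1 j (A j)

/-- Expectation with respect to the two-stage randomization: `A` is uniform on the
admissible first-stage assignments and, given `A`, the treated sets are uniform on the
admissible second-stage assignments (independently across clusters). -/
def expec (f : (Fin d.J → Fin d.m) → ((j : Fin d.J) → Finset (Fin (d.n j))) → ℝ) : ℝ :=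
  ∑ A ∈ d.mechA, ∑ S ∈ d.treatA A,
    f A S / ((d.mechA.card : ℝ) * ((d.treatA A).card : ℝ))

/-- Covariance under the two-stage randomization. -/
def cov (f g : (Fin d.J → Fin d.m) → ((j : Fin d.J) → Finset (Fin (d.n j))) → ℝ) : ℝ :=
  d.expec fun A S => (f A S - d.expec f) * (g A S - d.expec g)

/-- Variance under the two-stage randomization. -/
def var (f : (Fin d.J → Fin d.m) → ((j : Fin d.J) → Finset (Fin (d.n j))) → ℝ) : ℝ :=
  d.cov f f

/-- Observed outcome of unit `i` in cluster `j`: `Y_{ij} = Y_{ij}(Z_{ij}, A_j)`. -/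
def Yobs (A : Fin d.J → Fin d.m) (S : (j : Fin d.J) → Finset (Fin (d.n j)))
    (j : Fin d.J) (i : Fin (d.n j)) : ℝ :=
  d.Y j i (decide (i ∈ S j)) (A j)

/-- `Ŷ_j(z)`: average observed outcome among units of cluster `j` with `Z_{ij} = z`. -/
def hatYj (A : Fin d.J → Fin d.m) (S : (j : Fin d.J) → Finset (Fin (d.n j)))
    (z : Bool) (j : Fin d.J) : ℝ :=
  (∑ i ∈ Finset.univ.filter (fun i => decide (i ∈ S j) = z), d.Yobs A S j i) /
    ((Finset.univ.filter (fun i : Fin (d.n j) => decide (i ∈ S j) = z)).card : ℝ)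

/-- `Ŷ(z,a)`: average of `Ŷ_j(z)` over clusters with `A_j = a`. -/
def hatY (A : Fin d.J → Fin d.m) (S : (j : Fin d.J) → Finset (Fin (d.n j)))
    (z : Bool) (a : Fin d.m) : ℝ :=
  (∑ j ∈ Finset.univ.filter (fun j => A j = a), d.hatYj A S z j) / (d.Jc a : ℝ)

/-- `Ȳ_j(z,a)`: cluster-level average potential outcome. -/
def Ybarj (j : Fin d.J) (z : Bool) (a : Fin d.m) : ℝ :=
  (∑ i, d.Y j i z a) / (d.n j : ℝ)

/-- `Ȳ(z,a)`: population-level average potential outcome. -/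
def Ybar (z : Bool) (a : Fin d.m) : ℝ :=
  (∑ j, d.Ybarj j z a) / (d.J : ℝ)

/-- `σ_j²(z,z';a,a')`: within-cluster covariance of the potential outcomes. -/
def sigU (j : Fin d.J) (z z' : Bool) (a a' : Fin d.m) : ℝ :=
  (∑ i, (d.Y j i z a - d.Ybarj j z a) * (d.Y j i z' a' - d.Ybarj j z' a')) /
    ((d.n j : ℝ) - 1)

/-- `σ_b²(z,z';a,a')`: between-cluster covariance of the cluster averages. -/
def sigB (z z' : Bool) (a a' : Fin d.m) : ℝ :=
  (∑ j, (d.Ybarj j z a - d.Ybar z a) * (d.Ybarj j z' a' - d.Ybar z' a')) /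
    ((d.J : ℝ) - 1)

/-- `σ̂_b²(z,z';a)`: between-cluster sample covariance among clusters with `A_j = a`. -/
def sigBhat (A : Fin d.J → Fin d.m) (S : (j : Fin d.J) → Finset (Fin (d.n j)))
    (z z' : Bool) (a : Fin d.m) : ℝ :=
  (∑ j ∈ Finset.univ.filter (fun j => A j = a),
      (d.hatYj A S z j - d.hatY A S z a) * (d.hatYj A S z' j - d.hatY A S z' a)) /
    ((d.Jc a : ℝ) - 1)

end TwoStageDesign

open Finset

namespace Finset

variable {ι α K : Type*} [DecidableEq ι]

theorem card_filter_apply_eq_of_comp_perm_mem {β : Type*} [DecidableEq β] {𝒜 : Finset (ι → β)}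
    (h𝒜 : ∀ A ∈ 𝒜, ∀ σ : Equiv.Perm ι, A ∘ σ ∈ 𝒜) (b : β) (i i' : ι) :
    #{A ∈ 𝒜 | A i = b} = #{A ∈ 𝒜 | A i' = b} := by
  refine card_nbij' (· ∘ Equiv.swap i i') (· ∘ Equiv.swap i i') ?_ ?_ ?_ ?_ <;>
    intro A hA <;> simp_all [Function.comp_def]

variable [Fintype ι] [Field K] [CharZero K]

theorem sum_sum_mem_comm {M : Type*} [AddCommMonoid M] (𝒜 : Finset α) (s : α → Finset ι)
    (g : α → ι → M) :
    ∑ x ∈ 𝒜, ∑ i ∈ s x, g x i = ∑ i, ∑ x ∈ 𝒜 with i ∈ s x, g x i :=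
  sum_comm' fun x i => by simp

theorem expect_sum_eq_of_card_filter_mem_eq {𝒜 : Finset α} (h𝒜 : 𝒜.Nonempty)
    (s : α → Finset ι) {c : ℕ} (hs : ∀ x ∈ 𝒜, #(s x) = c)
    (hincl : ∀ i i', #{x ∈ 𝒜 | i ∈ s x} = #{x ∈ 𝒜 | i' ∈ s x}) (f : ι → K) :
    𝔼 x ∈ 𝒜, ∑ i ∈ s x, f i = c / Fintype.card ι * ∑ i, f i := by
  rcases isEmpty_or_nonempty ι with hι | hι
  · simp [Subsingleton.elim (s _) ∅]
  let i₀ := Classical.arbitrary ι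
  have hsum : ∑ x ∈ 𝒜, ∑ i ∈ s x, f i = #{x ∈ 𝒜 | i₀ ∈ s x} * ∑ i, f i := by
    rw [sum_sum_mem_comm, mul_sum]
    simp [hincl _ i₀]
  have hcount : (Fintype.card ι : K) * #{x ∈ 𝒜 | i₀ ∈ s x} = c * #𝒜 := by
    norm_cast
    calc Fintype.card ι * #{x ∈ 𝒜 | i₀ ∈ s x} = ∑ i, #{x ∈ 𝒜 | i ∈ s x} := by
          simp [hincl _ i₀]
      _ = ∑ x ∈ 𝒜, #(s x) := by simp only [card_eq_sum_ones (s _), sum_sum_mem_comm]; simp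
      _ = c * #𝒜 := by rw [sum_congr rfl hs]; simp [mul_comm]
  rw [expect_eq_sum_div_card, hsum]
  have h𝒜 : (#𝒜 : K) ≠ 0 := by simp [h𝒜.ne_empty]
  have hι : (Fintype.card ι : K) ≠ 0 := Nat.cast_ne_zero.2 Fintype.card_ne_zero
  field_simp
  linear_combination (∑ i, f i) * hcount

theorem card_filter_mem_powersetCard_eq (k : ℕ) (i i' : ι) :
    #{T ∈ powersetCard k (univ : Finset ι) | i ∈ T} =
      #{T ∈ powersetCard k (univ : Finset ι) | i' ∈ T} := by
  refine card_nbij' (·.map (Equiv.swap i i').toEmbedding) (·.map (Equiv.swap i i').toEmbedding)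
    ?_ ?_ ?_ ?_ <;> intro T hT <;> simp_all [mem_map_equiv, map_map, Finset.ext_iff]

theorem expect_powersetCard_expect {k : ℕ} (hk₀ : k ≠ 0) (hk : k ≤ Fintype.card ι)
    (f : ι → K) : 𝔼 T ∈ powersetCard k univ, 𝔼 i ∈ T, f i = 𝔼 i, f i := by
  have hP : (powersetCard k (univ : Finset ι)).Nonempty := powersetCard_nonempty.2 (by simpa)
  have hι : (Fintype.card ι : K) ≠ 0 := Nat.cast_ne_zero.2 (by omega)
  calc 𝔼 T ∈ powersetCard k univ, 𝔼 i ∈ T, f i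
      = (𝔼 T ∈ powersetCard k univ, ∑ i ∈ T, f i) / k := by
        rw [expect_div]
        refine expect_congr rfl fun T hT => ?_
        rw [expect_eq_sum_div_card, (mem_powersetCard_univ.1 hT)]
    _ = 𝔼 i, f i := by
        rw [expect_sum_eq_of_card_filter_mem_eq hP (fun T => T)
          (fun T hT => mem_powersetCard_univ.1 hT) (card_filter_mem_powersetCard_eq k),
          Fintype.expect_eq_sum_div_card]
        field_simp

theorem expect_powersetCard_expect_compl {k : ℕ} (hk : k < Fintype.card ι) (f : ι → K) :
    𝔼 T ∈ powersetCard k univ, 𝔼 i ∈ Tᶜ, f i = 𝔼 i, f i := by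
  rw [← expect_powersetCard_expect (k := Fintype.card ι - k) (by omega) (by omega) f]
  exact expect_nbij' compl compl (fun T hT => by simp_all [card_compl])
    (fun T hT => by simp_all [card_compl]; omega) (by simp) (by simp) (by simp)

theorem expect_powersetCard_expect_filter_decide (z : Bool) {k : ℕ} (hk₀ : k ≠ 0)
    (hk : k < Fintype.card ι) (f : ι → K) :
    𝔼 T ∈ powersetCard k univ, 𝔼 i ∈ {i | decide (i ∈ T) = z}, f i = 𝔼 i, f i := by
  cases z
  · simpa [compl_eq_univ_sdiff, sdiff_eq_filter] using expect_powersetCard_expect_compl hk f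
  · simpa using expect_powersetCard_expect hk₀ hk.le f

theorem expect_piFinset_apply {γ : ι → Type*} [∀ i, DecidableEq (γ i)] {t : ∀ i, Finset (γ i)}
    (ht : ∀ i, (t i).Nonempty) (j : ι) (g : γ j → K) :
    𝔼 S ∈ Fintype.piFinset t, g (S j) = 𝔼 x ∈ t j, g x := by
  set c := ∏ k ∈ univ.erase j, #(t k)
  have hc : (c : K) ≠ 0 := by
    simp only [c, Nat.cast_ne_zero, prod_ne_zero_iff]
    exact fun k _ => (ht k).card_pos.ne'
  have hsum : ∑ S ∈ Fintype.piFinset t, g (S j) = c * ∑ x ∈ t j, g x := by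
    rw [← sum_fiberwise_of_maps_to (g := fun S => S j) (t := t j)
      (fun S hS => Fintype.mem_piFinset.1 hS j), mul_sum]
    refine sum_congr rfl fun x hx => ?_
    rw [sum_congr rfl fun S hS => by rw [(mem_filter.1 hS).2], sum_const,
      Fintype.card_filter_piFinset_eq_of_mem t j hx, nsmul_eq_mul]
  have hcard : #(Fintype.piFinset t) = #(t j) * c := by
    rw [Fintype.card_piFinset, ← mul_prod_erase univ _ (mem_univ j)]
  rw [expect_eq_sum_div_card, expect_eq_sum_div_card, hsum, hcard, Nat.cast_mul,
    mul_comm (#(t j) : K), mul_div_mul_left _ _ hc]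

end Finset

theorem Fintype.exists_card_filter_apply_eq {ι β : Type*} [Fintype ι] [Fintype β]
    [DecidableEq β] (c : β → ℕ) (hc : ∑ b, c b = Fintype.card ι) :
    ∃ A : ι → β, ∀ b, #{i | A i = b} = c b := by
  let e : ι ≃ Σ b, Fin (c b) := Fintype.equivOfCardEq (by simp [hc])
  refine ⟨fun i => (e i).1, fun b => ?_⟩
  have hfiber : (univ.filter fun i => (e i).1 = b).map e.toEmbedding =
      ({b} : Finset β).sigma fun _ => univ := by
    ext ⟨b', x⟩
    simp [eq_comm]
  rw [← card_map e.toEmbedding, hfiber]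
  simp

namespace TwoStageDesign

variable (d : TwoStageDesign)

theorem expec_eq_expect (f : (Fin d.J → Fin d.m) → ((j : Fin d.J) → Finset (Fin (d.n j))) → ℝ) :
    d.expec f = 𝔼 A ∈ d.mechA, 𝔼 S ∈ d.treatA A, f A S := by
  simp only [expec, expect_eq_sum_div_card, sum_div, div_div, mul_comm]

theorem expec_sub (f g : (Fin d.J → Fin d.m) → ((j : Fin d.J) → Finset (Fin (d.n j))) → ℝ) :
    d.expec (fun A S => f A S - g A S) = d.expec f - d.expec g := by
  simp only [expec_eq_expect, expect_sub_distrib]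

theorem expec_sum {κ : Type*} (s : Finset κ)
    (F : κ → (Fin d.J → Fin d.m) → ((j : Fin d.J) → Finset (Fin (d.n j))) → ℝ) :
    d.expec (fun A S => ∑ x ∈ s, F x A S) = ∑ x ∈ s, d.expec (F x) := by
  simp only [expec_eq_expect, expect_sum_comm]

theorem expec_const_mul (c : ℝ)
    (f : (Fin d.J → Fin d.m) → ((j : Fin d.J) → Finset (Fin (d.n j))) → ℝ) :
    d.expec (fun A S => c * f A S) = c * d.expec f := by
  simp only [expec_eq_expect, mul_expect]

theorem mechA_nonempty (hJsum : ∑ a, d.Jc a = d.J) : d.mechA.Nonempty := by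
  obtain ⟨A, hA⟩ := Fintype.exists_card_filter_apply_eq (ι := Fin d.J) d.Jc (by simpa using hJsum)
  exact ⟨A, by simpa [mechA] using hA⟩

theorem comp_perm_mem_mechA {A : Fin d.J → Fin d.m} (hA : A ∈ d.mechA)
    (σ : Equiv.Perm (Fin d.J)) : A ∘ σ ∈ d.mechA := by
  simp only [mechA, mem_filter, mem_univ, true_and, Function.comp_apply] at hA ⊢
  intro a
  rw [← hA a]
  apply card_nbij' σ σ.symm <;> simp [Set.MapsTo, Set.LeftInvOn, Set.RightInvOn]

theorem treatA_eq_piFinset (A : Fin d.J → Fin d.m) :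
    d.treatA A = Fintype.piFinset fun j => powersetCard (d.n1 j (A j)) univ := by
  ext S
  simp [treatA, Fintype.mem_piFinset]

theorem hatYj_eq_expect (A : Fin d.J → Fin d.m) (S : (j : Fin d.J) → Finset (Fin (d.n j)))
    (z : Bool) (j : Fin d.J) :
    d.hatYj A S z j = 𝔼 i ∈ {i | decide (i ∈ S j) = z}, d.Y j i z (A j) := by
  rw [hatYj, expect_eq_sum_div_card]
  congr 1
  exact sum_congr rfl fun i hi => by rw [Yobs, (mem_filter.1 hi).2]

theorem Ybarj_eq_expect (j : Fin d.J) (z : Bool) (a : Fin d.m) :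
    d.Ybarj j z a = 𝔼 i, d.Y j i z a := by
  rw [Ybarj, Fintype.expect_eq_sum_div_card, Fintype.card_fin]

theorem expect_treatA_hatYj (hn1lo : ∀ j a, 1 ≤ d.n1 j a) (hn1hi : ∀ j a, d.n1 j a ≤ d.n j - 1)
    (A : Fin d.J → Fin d.m) (z : Bool) (j : Fin d.J) :
    𝔼 S ∈ d.treatA A, d.hatYj A S z j = d.Ybarj j z (A j) := by
  have hsizes : ∀ k, (powersetCard (d.n1 k (A k)) (univ : Finset (Fin (d.n k)))).Nonempty :=
    fun k => powersetCard_nonempty.2 (by simpa using (hn1hi k (A k)).trans (Nat.sub_le _ _))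
  have hlo := hn1lo j (A j)
  have hhi := hn1hi j (A j)
  simp only [hatYj_eq_expect, treatA_eq_piFinset]
  rw [expect_piFinset_apply hsizes j (fun T => 𝔼 i ∈ {i | decide (i ∈ T) = z}, d.Y j i z (A j)),
    expect_powersetCard_expect_filter_decide z (by omega) (by rw [Fintype.card_fin]; omega),
    Ybarj_eq_expect]

theorem expect_mechA_sum_filter (hJsum : ∑ a, d.Jc a = d.J) (a : Fin d.m) (g : Fin d.J → ℝ) :
    𝔼 A ∈ d.mechA, ∑ j with A j = a, g j = d.Jc a / d.J * ∑ j, g j := by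
  have hincl (j j' : Fin d.J) :
      #{A ∈ d.mechA | j ∈ ({j | A j = a} : Finset _)} =
        #{A ∈ d.mechA | j' ∈ ({j | A j = a} : Finset _)} := by
    simpa using card_filter_apply_eq_of_comp_perm_mem
      (fun A hA σ => d.comp_perm_mem_mechA hA σ) a j j'
  simpa using expect_sum_eq_of_card_filter_mem_eq (d.mechA_nonempty hJsum)
    (fun A => {j | A j = a}) (fun A hA => (mem_filter.1 hA).2 a) hincl g

theorem expec_hatY (hJc : ∀ a, 1 ≤ d.Jc a) (hJsum : ∑ a, d.Jc a = d.J)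
    (hn1lo : ∀ j a, 1 ≤ d.n1 j a) (hn1hi : ∀ j a, d.n1 j a ≤ d.n j - 1) (z : Bool) (a : Fin d.m) :
    d.expec (fun A S => d.hatY A S z a) = d.Ybar z a := by
  have hJca : (d.Jc a : ℝ) ≠ 0 := by have := hJc a; positivity
  calc d.expec (fun A S => d.hatY A S z a)
      = 𝔼 A ∈ d.mechA, (∑ j with A j = a, 𝔼 S ∈ d.treatA A, d.hatYj A S z j) / d.Jc a := by
        rw [expec_eq_expect]
        refine expect_congr rfl fun A _ => ?_
        simp only [hatY, ← expect_div, expect_sum_comm]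
    _ = 𝔼 A ∈ d.mechA, (∑ j with A j = a, d.Ybarj j z a) / d.Jc a := by
        refine expect_congr rfl fun A _ => ?_
        congr 1
        refine sum_congr rfl fun j hj => ?_
        rw [d.expect_treatA_hatYj hn1lo hn1hi, (mem_filter.1 hj).2]
    _ = d.Ybar z a := by
        rw [← expect_div, d.expect_mechA_sum_filter hJsum, Ybar]
        field_simp

end TwoStageDesign

theorem effects_unbiased_general (d : TwoStageDesign)
    (hJc : ∀ a, 1 ≤ d.Jc a) (hJsum : ∑ a, d.Jc a = d.J)
    (hn1lo : ∀ j a, 1 ≤ d.n1 j a) (hn1hi : ∀ j a, d.n1 j a ≤ d.n j - 1) :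
    (∀ a : Fin d.m,
        d.expec (fun A S => d.hatY A S true a - d.hatY A S false a) =
          d.Ybar true a - d.Ybar false a) ∧
    (d.expec (fun A S =>
          ∑ a, ((d.Jc a : ℝ) / (d.J : ℝ)) * (d.hatY A S true a - d.hatY A S false a)) =
        ∑ a, ((d.Jc a : ℝ) / (d.J : ℝ)) * (d.Ybar true a - d.Ybar false a)) ∧
    (∀ (z : Bool) (a a' : Fin d.m), a ≠ a' →
        d.expec (fun A S => d.hatY A S z a - d.hatY A S z a') =
          d.Ybar z a - d.Ybar z a') := by
  have hunbiased := d.expec_hatY hJc hJsum hn1lo hn1hi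
  refine ⟨fun a => ?_, ?_, fun z a a' _ => ?_⟩
  · rw [d.expec_sub, hunbiased, hunbiased]
  · rw [d.expec_sum]
    refine sum_congr rfl fun a _ => ?_
    rw [d.expec_const_mul, d.expec_sub, hunbiased, hunbiased]
  · rw [d.expec_sub, hunbiased, hunbiased]

/-- **Unbiased estimation of the direct, marginal direct, and spillover effects
(Theorem 1).** Under the two-stage randomized design:
`E[Ŷ(1,a) − Ŷ(0,a)] = ADE(a)` for every `a`;
`E[∑_a (J_a/J)(Ŷ(1,a) − Ŷ(0,a))] = MDE`; and
`E[Ŷ(z,a) − Ŷ(z,a')] = ASE(z;a,a')` for every `z` and `a ≠ a'`. -/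
theorem effects_unbiased (d : TwoStageDesign)
    (hJ : 2 ≤ d.J) (hn : ∀ j, 2 ≤ d.n j)
    (hJc : ∀ a, 1 ≤ d.Jc a) (hJsum : ∑ a, d.Jc a = d.J)
    (hn1lo : ∀ j a, 1 ≤ d.n1 j a) (hn1hi : ∀ j a, d.n1 j a ≤ d.n j - 1) :
    (∀ a : Fin d.m,
        d.expec (fun A S => d.hatY A S true a - d.hatY A S false a) =
          d.Ybar true a - d.Ybar false a) ∧
    (d.expec (fun A S =>
          ∑ a, ((d.Jc a : ℝ) / (d.J : ℝ)) * (d.hatY A S true a - d.hatY A S false a)) =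
        ∑ a, ((d.Jc a : ℝ) / (d.J : ℝ)) * (d.Ybar true a - d.Ybar false a)) ∧
    (∀ (z : Bool) (a a' : Fin d.m), a ≠ a' →
        d.expec (fun A S => d.hatY A S z a - d.hatY A S z a') =
          d.Ybar z a - d.Ybar z a') :=
  effects_unbiased_general d hJc hJsum hn1lo hn1hi
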